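/- Let 0 < θ < θ̄, and let p ≥ 1 and q ≥ 0 be integers. Let X₁, …, X_p, Y₁, …, Y_q be jointly independent positive random variables on a probability space such that P[X_i ≥ z] ≍ z^{-θ} as z → ∞ for each i and P[Y_j ≥ z] ≍ z^{-θ̄} as z → ∞ for each j. Then P[X₁ ⋯ X_p · Y₁ ⋯ Y_q ≥ z] ≍ z^{-θ} (log z)^{p-1} as z → ∞. -/

import Mathlib

/-!
Write `T_W(z) = P[W ≥ z]`. Let `U`, `V` be independent and positive, with
`T_U(z) ≍ z^{-θ} (log z)^a` and `T_V(z) ≍ z^{-θ'}`, `θ ≤ θ'`. Splitting `{UV ≥ z}` according to the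
shell `R^k ≤ V < R^{k+1}` containing `V` shows that `T_{UV}(z) ≍ z^{-θ} (log z)^{a+1}` if `θ' = θ`,
because each of the `≍ log z` shells with `R^k ≤ √z` contributes `≍ z^{-θ} (log z)^a`, and
`T_{UV}(z) ≍ z^{-θ} (log z)^a` if `θ' > θ`, because the contributions of the shells then decay
geometrically. Multiplying in the `X_i` one at a time and then the `Y_j` gives the theorem.
-/

open MeasureTheory ProbabilityTheory Real

/-- `AsympAtTop f g` : there exist constants `0 < κ₁ ≤ κ₂ < ∞` and `z₀ > 0` such that
`κ₁ f(z) ≤ g(z) ≤ κ₂ f(z)` for all `z ≥ z₀`. -/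
def AsympAtTop (f g : ℝ → ℝ) : Prop :=
  ∃ κ₁ κ₂ z₀ : ℝ, 0 < κ₁ ∧ κ₁ ≤ κ₂ ∧ 0 < z₀ ∧
    ∀ z, z₀ ≤ z → κ₁ * f z ≤ g z ∧ g z ≤ κ₂ * f z

open Filter Set

lemma ProbabilityTheory.IndepFun.measureReal_inter_preimage_eq_mul {Ω β γ : Type*}
    [MeasurableSpace Ω] [MeasurableSpace β] [MeasurableSpace γ] {μ : Measure Ω}
    {U : Ω → β} {V : Ω → γ} (h : IndepFun U V μ) {S : Set β} {T : Set γ}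
    (hS : MeasurableSet S) (hT : MeasurableSet T) :
    μ.real (U ⁻¹' S ∩ V ⁻¹' T) = μ.real (U ⁻¹' S) * μ.real (V ⁻¹' T) := by
  simp only [measureReal_def, h.measure_inter_preimage_eq_mul S T hS hT, ENNReal.toReal_mul]

lemma Real.div_rpow_neg {x z : ℝ} (hz : 0 ≤ z) (hx : 0 < x) (θ : ℝ) :
    (z / x) ^ (-θ) = x ^ θ * z ^ (-θ) := by
  rw [rpow_neg (div_nonneg hz hx.le), div_rpow hz hx.le, inv_div, div_eq_mul_inv, ← rpow_neg hz]

lemma Real.div_two_pow_succ_rpow_neg_mul {z : ℝ} (hz : 0 ≤ z) (θ θ' : ℝ) (k : ℕ) :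
    (z / 2 ^ (k + 1)) ^ (-θ) * ((2 : ℝ) ^ k) ^ (-θ') = 2 ^ θ * (2 ^ (θ - θ')) ^ k * z ^ (-θ) := by
  have h2k : (0 : ℝ) < 2 ^ k := by positivity
  rw [div_rpow_neg hz (by positivity), pow_succ, mul_rpow h2k.le zero_le_two,
    rpow_pow_comm zero_le_two, sub_eq_add_neg, rpow_add h2k]
  ring

lemma div_le_natCast_pred_of_sqrt_lt_pow {R z : ℝ} {K : ℕ} (hR : 1 < R) (hz : 0 < z)
    (hlogz : 8 * log R + 1 ≤ log z) (hsK : √z < R ^ (K + 1)) :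
    (1 + log z) / (4 * log R) ≤ ((K - 1 : ℕ) : ℝ) := by
  have hL : 0 < log R := log_pos hR
  have hKL : log z / 2 < (K + 1) * log R := by
    have := log_lt_log (sqrt_pos.2 hz) hsK
    rwa [log_pow, Nat.cast_succ, log_sqrt hz.le] at this
  have hK1 : 1 ≤ K := by
    by_contra h
    have : (K : ℝ) < 1 := by exact_mod_cast not_le.1 h
    nlinarith
  rw [Nat.cast_pred hK1, div_le_iff₀ (by positivity)]
  nlinarith

section Tail

variable {Ω : Type*} [MeasurableSpace Ω] {μ : Measure Ω} {U V W : Ω → ℝ} {θ θ' C_U C_V : ℝ}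
  {a : ℕ}

noncomputable def tailProb (μ : Measure Ω) (W : Ω → ℝ) (z : ℝ) : ℝ := μ.real {ω | z ≤ W ω}

lemma tailProb_nonneg (W : Ω → ℝ) (z : ℝ) : 0 ≤ tailProb μ W z := measureReal_nonneg

/- The profile is `z^{-θ} (1 + log z)^a` rather than `z^{-θ} (log z)^a` so that upper bounds can be
required on all of `[1, ∞)`, which is where they are evaluated in the shell decompositions. -/
def TailUpperBound (μ : Measure Ω) (W : Ω → ℝ) (θ : ℝ) (a : ℕ) (C : ℝ) : Prop :=
  ∀ z, 1 ≤ z → tailProb μ W z ≤ C * z ^ (-θ) * (1 + log z) ^ a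

def TailLowerBound (μ : Measure Ω) (W : Ω → ℝ) (θ : ℝ) (a : ℕ) (c : ℝ) : Prop :=
  ∀ᶠ z in atTop, c * z ^ (-θ) * (1 + log z) ^ a ≤ tailProb μ W z

def HasTailOrder (μ : Measure Ω) (W : Ω → ℝ) (θ : ℝ) (a : ℕ) : Prop :=
  (∃ C, TailUpperBound μ W θ a C) ∧ ∃ c, 0 < c ∧ TailLowerBound μ W θ a c

lemma TailUpperBound.nonneg {C : ℝ} (h : TailUpperBound μ W θ a C) : 0 ≤ C := by
  simpa using (tailProb_nonneg W 1).trans (h 1 le_rfl)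

lemma TailUpperBound.exists_slab_lowerBound {C c : ℝ} (hVC : TailUpperBound μ V θ 0 C)
    (hVc : TailLowerBound μ V θ 0 c) (hc : 0 < c) (hθ : 0 < θ) :
    ∃ R, 1 < R ∧ ∀ k, 1 ≤ k →
      c / 2 * (R ^ k) ^ (-θ) ≤ tailProb μ V (R ^ k) - tailProb μ V (R ^ (k + 1)) := by
  obtain ⟨z₀, hz₀⟩ := eventually_atTop.1 hVc
  -- `R` is so large that the upper bound at `R^{k+1}` is at most half the lower bound at `R^k`.
  have hsmall : ∀ᶠ R in atTop, C * R ^ (-θ) ≤ c / 2 :=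
    ((tendsto_rpow_neg_atTop hθ).const_mul C).eventually
      (ge_mem_nhds (by rw [mul_zero]; positivity))
  obtain ⟨R, hRz₀, hR2, hRC⟩ :=
    ((eventually_ge_atTop z₀).and ((eventually_ge_atTop 2).and hsmall)).exists
  refine ⟨R, by linarith, fun k hk => ?_⟩
  have hR0 : 0 ≤ R := by linarith
  have hRk : R ≤ R ^ k := le_self_pow₀ (by linarith) (by omega)
  have hlow : c * (R ^ k) ^ (-θ) ≤ tailProb μ V (R ^ k) := by simpa using hz₀ _ (hRz₀.trans hRk)
  have hup : tailProb μ V (R ^ (k + 1)) ≤ c / 2 * (R ^ k) ^ (-θ) :=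
    calc tailProb μ V (R ^ (k + 1)) ≤ C * (R ^ (k + 1)) ^ (-θ) := by
          simpa using hVC _ (one_le_pow₀ (by linarith))
      _ = C * R ^ (-θ) * (R ^ k) ^ (-θ) := by
          rw [pow_succ, mul_rpow (pow_nonneg hR0 k) hR0]
          ring
      _ ≤ c / 2 * (R ^ k) ^ (-θ) := by gcongr
  linarith

lemma HasTailOrder.asympAtTop (h : HasTailOrder μ W θ a) :
    AsympAtTop (fun z => z ^ (-θ) * log z ^ a) (tailProb μ W) := by
  obtain ⟨⟨C, hC⟩, c, hc, hlow⟩ := h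
  obtain ⟨z₁, hz₁⟩ := eventually_atTop.1 hlow
  refine ⟨c, max c (2 ^ a * C), max z₁ (exp 1), hc, le_max_left _ _,
    lt_max_of_lt_right (exp_pos 1), fun z hz => ?_⟩
  have hze : exp 1 ≤ z := (le_max_right _ _).trans hz
  have hlog : 1 ≤ log z := by
    rw [← log_exp 1]
    exact log_le_log (exp_pos 1) hze
  have hz1 : 1 ≤ z := (one_le_exp zero_le_one).trans hze
  constructor
  · calc c * (z ^ (-θ) * log z ^ a) ≤ c * z ^ (-θ) * (1 + log z) ^ a := by
          rw [← mul_assoc]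
          gcongr
          linarith
      _ ≤ tailProb μ W z := hz₁ z ((le_max_left _ _).trans hz)
  · calc tailProb μ W z ≤ C * z ^ (-θ) * (1 + log z) ^ a := hC z hz1
      _ ≤ C * z ^ (-θ) * (2 * log z) ^ a := by
          have := hC.nonneg
          gcongr
          linarith
      _ = 2 ^ a * C * (z ^ (-θ) * log z ^ a) := by ring
      _ ≤ max c (2 ^ a * C) * (z ^ (-θ) * log z ^ a) := by
          gcongr
          exact le_max_right _ _

lemma hasTailOrder_of_asympAtTop [IsProbabilityMeasure μ] (hθ : 0 ≤ θ)
    (h : AsympAtTop (fun z => z ^ (-θ)) (tailProb μ W)) : HasTailOrder μ W θ 0 := by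
  obtain ⟨κ₁, κ₂, z₀, hκ₁, hκ₁₂, hz₀, hW⟩ := h
  refine ⟨⟨κ₂ + z₀ ^ θ, fun z hz => ?_⟩, κ₁, hκ₁, eventually_atTop.2 ⟨z₀, fun z hz => by
    simpa using (hW z hz).1⟩⟩
  have hz0 : 0 < z := zero_lt_one.trans_le hz
  rw [pow_zero, mul_one, add_mul]
  rcases le_or_gt z₀ z with hzz₀ | hzz₀
  · exact (hW z hzz₀).2.trans (le_add_of_nonneg_right (by positivity))
  · calc tailProb μ W z ≤ 1 := measureReal_le_one
      _ = z ^ θ * z ^ (-θ) := by rw [rpow_neg hz0.le, mul_inv_cancel₀ (by positivity)]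
      _ ≤ z₀ ^ θ * z ^ (-θ) := by gcongr
      _ ≤ κ₂ * z ^ (-θ) + z₀ ^ θ * z ^ (-θ) :=
          le_add_of_nonneg_left (mul_nonneg (hκ₁.le.trans hκ₁₂) (by positivity))

lemma TailUpperBound.tailProb_div_two_pow_mul_le (hUC : TailUpperBound μ U θ a C_U)
    (hVC : TailUpperBound μ V θ' 0 C_V) {z : ℝ} {k : ℕ} (hkz : 2 ^ (k + 1) ≤ z) :
    tailProb μ U (z / 2 ^ (k + 1)) * tailProb μ V (2 ^ k) ≤
      2 ^ θ * C_U * C_V * (2 ^ (θ - θ')) ^ k * z ^ (-θ) * (1 + log z) ^ a := by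
  have hz : 0 < z := lt_of_lt_of_le (by positivity) hkz
  have hCU := hUC.nonneg
  have hCV := hVC.nonneg
  have hzk : 1 ≤ z / 2 ^ (k + 1) := (one_le_div (by positivity)).2 hkz
  have hlogk : log (z / 2 ^ (k + 1)) ≤ log z :=
    log_le_log (by positivity) (div_le_self hz.le (one_le_pow₀ one_le_two))
  have hlog : (1 + log (z / 2 ^ (k + 1))) ^ a ≤ (1 + log z) ^ a :=
    pow_le_pow_left₀ (by linarith [log_nonneg hzk]) (by linarith) a
  calc tailProb μ U (z / 2 ^ (k + 1)) * tailProb μ V (2 ^ k)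
      ≤ (C_U * (z / 2 ^ (k + 1)) ^ (-θ) * (1 + log (z / 2 ^ (k + 1))) ^ a) *
          (C_V * ((2 : ℝ) ^ k) ^ (-θ') * (1 + log (2 ^ k)) ^ 0) :=
        mul_le_mul (hUC _ hzk) (hVC _ (one_le_pow₀ one_le_two)) (tailProb_nonneg _ _)
          (mul_nonneg (by positivity) (pow_nonneg (by linarith [log_nonneg hzk]) a))
    _ ≤ (C_U * (z / 2 ^ (k + 1)) ^ (-θ) * (1 + log z) ^ a) * (C_V * ((2 : ℝ) ^ k) ^ (-θ')) := by
        rw [pow_zero, mul_one]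
        gcongr
    _ = _ := by
        linear_combination
          C_U * C_V * (1 + log z) ^ a * div_two_pow_succ_rpow_neg_mul hz.le θ θ' k

variable [IsFiniteMeasure μ]

lemma tailProb_mul_le_add_sum (hind : IndepFun U V μ) (hV : ∀ᵐ ω ∂μ, 0 < V ω) {R z : ℝ}
    (hR : 1 < R) (hz : 0 < z) (K : ℕ) :
    tailProb μ (fun ω => U ω * V ω) z ≤ tailProb μ U z + tailProb μ V (R ^ K) +
      ∑ k ∈ Finset.range K, tailProb μ U (z / R ^ (k + 1)) * tailProb μ V (R ^ k) := by
  have hcover : ({ω | z ≤ U ω * V ω} : Set Ω) ≤ᵐ[μ] ((U ⁻¹' Ici z ∪ V ⁻¹' Ici (R ^ K)) ∪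
      ⋃ k ∈ Finset.range K, U ⁻¹' Ici (z / R ^ (k + 1)) ∩ V ⁻¹' Ici (R ^ k) : Set Ω) := by
    filter_upwards [hV] with ω hVω (hω : z ≤ U ω * V ω)
    show ω ∈ (_ : Set Ω)
    simp only [mem_union, mem_preimage, mem_Ici, mem_iUnion, mem_inter_iff, Finset.mem_range,
      exists_prop]
    by_cases hVK : R ^ K ≤ V ω
    · exact .inl (.inr hVK)
    by_cases hV1 : V ω < 1
    · exact .inl (.inl (by nlinarith))
    obtain ⟨k, hkV, hVk⟩ := exists_nat_pow_near (not_lt.1 hV1) hR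
    refine .inr ⟨k, (pow_lt_pow_iff_right₀ hR).1 (hkV.trans_lt (not_le.1 hVK)), ?_, hkV⟩
    calc z / R ^ (k + 1) ≤ z / V ω := div_le_div_of_nonneg_left hz.le hVω hVk.le
      _ ≤ U ω := (div_le_iff₀ hVω).2 hω
  calc tailProb μ (fun ω => U ω * V ω) z
      ≤ μ.real ((U ⁻¹' Ici z ∪ V ⁻¹' Ici (R ^ K)) ∪
          ⋃ k ∈ Finset.range K, U ⁻¹' Ici (z / R ^ (k + 1)) ∩ V ⁻¹' Ici (R ^ k)) :=
        ENNReal.toReal_mono (measure_ne_top _ _) (measure_mono_ae hcover)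
    _ ≤ μ.real (U ⁻¹' Ici z) + μ.real (V ⁻¹' Ici (R ^ K)) +
          ∑ k ∈ Finset.range K, μ.real (U ⁻¹' Ici (z / R ^ (k + 1)) ∩ V ⁻¹' Ici (R ^ k)) :=
        (measureReal_union_le _ _).trans
          (add_le_add (measureReal_union_le _ _) (measureReal_biUnion_finset_le _ _))
    _ = _ := by
        simp only [hind.measureReal_inter_preimage_eq_mul measurableSet_Ici measurableSet_Ici]
        rfl

lemma mul_tailProb_le_tailProb_mul (hind : IndepFun U V μ) {z ε : ℝ} (hz : 0 ≤ z)
    (hε : 0 < ε) : tailProb μ U (z / ε) * tailProb μ V ε ≤ tailProb μ (fun ω => U ω * V ω) z := by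
  calc tailProb μ U (z / ε) * tailProb μ V ε = μ.real (U ⁻¹' Ici (z / ε) ∩ V ⁻¹' Ici ε) :=
        (hind.measureReal_inter_preimage_eq_mul measurableSet_Ici measurableSet_Ici).symm
    _ ≤ _ := measureReal_mono fun ω ⟨hU, hV⟩ => ?_
  calc z = z / ε * ε := (div_mul_cancel₀ z hε.ne').symm
    _ ≤ U ω * V ω := mul_le_mul hU hV hε.le ((div_nonneg hz hε.le).trans hU)

lemma sum_tailProb_mul_sub_le_tailProb_mul (hU : Measurable U) (hV : Measurable V)
    (hind : IndepFun U V μ) {R z : ℝ} (hR : 1 < R) (hz : 0 ≤ z) (s : Finset ℕ) :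
    ∑ k ∈ s, tailProb μ U (z / R ^ k) * (tailProb μ V (R ^ k) - tailProb μ V (R ^ (k + 1))) ≤
      tailProb μ (fun ω => U ω * V ω) z := by
  set B : ℕ → Set Ω := fun k => U ⁻¹' Ici (z / R ^ k) ∩ V ⁻¹' Ico (R ^ k) (R ^ (k + 1))
  have hB : ∀ k, μ.real (B k) =
      tailProb μ U (z / R ^ k) * (tailProb μ V (R ^ k) - tailProb μ V (R ^ (k + 1))) := by
    intro k
    rw [hind.measureReal_inter_preimage_eq_mul measurableSet_Ici measurableSet_Ico,
      ← Ici_sdiff_Ici, preimage_sdiff, measureReal_sdiff (preimage_mono (Ici_subset_Ici.2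
        (pow_le_pow_right₀ hR.le k.le_succ))) (hV measurableSet_Ici)]
    rfl
  have hdisj : (s : Set ℕ).PairwiseDisjoint B := fun i _ j _ hij =>
    (((pow_right_mono₀ hR.le).pairwise_disjoint_on_Ico_succ hij).preimage V).mono
      inter_subset_right inter_subset_right
  calc ∑ k ∈ s, _ = ∑ k ∈ s, μ.real (B k) := by simp only [hB]
    _ = μ.real (⋃ k ∈ s, B k) := (measureReal_biUnion_finset hdisj fun k _ =>
        (hU measurableSet_Ici).inter (hV measurableSet_Ico)).symm
    _ ≤ _ := measureReal_mono (iUnion₂_subset fun k _ ω ⟨hUω, hVω, _⟩ => by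
        have hRk : 0 < R ^ k := pow_pos (zero_lt_one.trans hR) k
        calc z = z / R ^ k * R ^ k := (div_mul_cancel₀ z hRk.ne').symm
          _ ≤ U ω * V ω := mul_le_mul hUω hVω hRk.le ((div_nonneg hz hRk.le).trans hUω))

-- The `k`-th summand accounts for the shell `2^k ≤ V < 2^{k+1}`.
lemma TailUpperBound.tailProb_mul_le (hUC : TailUpperBound μ U θ a C_U)
    (hVC : TailUpperBound μ V θ' 0 C_V) (hind : IndepFun U V μ) (hV : ∀ᵐ ω ∂μ, 0 < V ω)
    (hθ : 0 ≤ θ) (hθθ' : θ ≤ θ') {z : ℝ} {K : ℕ} (hKz : 2 ^ K ≤ z) (hzK : z < 2 ^ (K + 1)) :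
    tailProb μ (fun ω => U ω * V ω) z ≤
      (C_U + 2 ^ θ * C_V + 2 ^ θ * C_U * C_V * ∑ k ∈ Finset.range K, (2 ^ (θ - θ')) ^ k) *
        z ^ (-θ) * (1 + log z) ^ a := by
  have hz1 : 1 ≤ z := (one_le_pow₀ one_le_two).trans hKz
  have hz : 0 < z := zero_lt_one.trans_le hz1
  have hCV := hVC.nonneg
  have hL : 1 ≤ (1 + log z) ^ a := one_le_pow₀ (by linarith [log_nonneg hz1])
  have hterm : ∀ k ∈ Finset.range K, tailProb μ U (z / 2 ^ (k + 1)) * tailProb μ V (2 ^ k) ≤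
      2 ^ θ * C_U * C_V * (2 ^ (θ - θ')) ^ k * z ^ (-θ) * (1 + log z) ^ a := fun k hk =>
    hUC.tailProb_div_two_pow_mul_le hVC
      ((pow_le_pow_right₀ one_le_two (Finset.mem_range.1 hk)).trans hKz)
  have hlast : tailProb μ V (2 ^ K) ≤ 2 ^ θ * C_V * z ^ (-θ) * (1 + log z) ^ a :=
    calc tailProb μ V (2 ^ K) ≤ C_V * ((2 : ℝ) ^ K) ^ (-θ') := by
          simpa using hVC _ (one_le_pow₀ one_le_two)
      _ ≤ C_V * (z / 2) ^ (-θ) := by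
          gcongr
          calc ((2 : ℝ) ^ K) ^ (-θ') ≤ ((2 : ℝ) ^ K) ^ (-θ) :=
                rpow_le_rpow_of_exponent_le (one_le_pow₀ one_le_two) (by linarith)
            _ ≤ (z / 2) ^ (-θ) := rpow_le_rpow_of_nonpos (by positivity)
                (by rw [pow_succ] at hzK; linarith) (by linarith)
      _ = 2 ^ θ * C_V * z ^ (-θ) := by rw [div_rpow_neg hz.le two_pos]; ring
      _ ≤ 2 ^ θ * C_V * z ^ (-θ) * (1 + log z) ^ a := le_mul_of_one_le_right (by positivity) hL
  calc tailProb μ (fun ω => U ω * V ω) z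
      ≤ tailProb μ U z + tailProb μ V (2 ^ K) +
          ∑ k ∈ Finset.range K, tailProb μ U (z / 2 ^ (k + 1)) * tailProb μ V (2 ^ k) :=
        tailProb_mul_le_add_sum hind hV one_lt_two hz K
    _ ≤ C_U * z ^ (-θ) * (1 + log z) ^ a + 2 ^ θ * C_V * z ^ (-θ) * (1 + log z) ^ a +
          ∑ k ∈ Finset.range K, 2 ^ θ * C_U * C_V * (2 ^ (θ - θ')) ^ k * z ^ (-θ) *
            (1 + log z) ^ a :=
        add_le_add (add_le_add (hUC z hz1) hlast) (Finset.sum_le_sum hterm)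
    _ = _ := by
        rw [← Finset.sum_mul, ← Finset.sum_mul, ← Finset.mul_sum]
        ring

lemma TailUpperBound.mul_of_eq (hUC : TailUpperBound μ U θ a C_U)
    (hVC : TailUpperBound μ V θ 0 C_V) (hind : IndepFun U V μ) (hV : ∀ᵐ ω ∂μ, 0 < V ω)
    (hθ : 0 ≤ θ) :
    TailUpperBound μ (fun ω => U ω * V ω) θ (a + 1)
      (C_U + 2 ^ θ * C_V + 2 ^ θ * C_U * C_V / log 2) := by
  intro z hz
  obtain ⟨K, hKz, hzK⟩ := exists_nat_pow_near hz one_lt_two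
  have hlogz : 0 ≤ log z := log_nonneg hz
  have hK : (K : ℝ) ≤ (1 + log z) / log 2 := by
    rw [le_div_iff₀ (log_pos one_lt_two), ← log_pow]
    linarith [log_le_log (by positivity) hKz]
  have hprod : 0 ≤ 2 ^ θ * C_U * C_V := by have := hUC.nonneg; have := hVC.nonneg; positivity
  have h2C : 0 ≤ C_U + 2 ^ θ * C_V := by have := hUC.nonneg; have := hVC.nonneg; positivity
  refine (hUC.tailProb_mul_le hVC hind hV hθ le_rfl hKz hzK).trans ?_
  simp only [sub_self, rpow_zero, one_pow, Finset.sum_const, Finset.card_range, nsmul_eq_mul,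
    mul_one, pow_succ]
  have : (C_U + 2 ^ θ * C_V + 2 ^ θ * C_U * C_V * K) ≤
      (C_U + 2 ^ θ * C_V + 2 ^ θ * C_U * C_V / log 2) * (1 + log z) := by
    calc _ ≤ (C_U + 2 ^ θ * C_V) * (1 + log z) + 2 ^ θ * C_U * C_V * ((1 + log z) / log 2) := by
          gcongr
          · nlinarith
      _ = _ := by ring
  calc _ ≤ (C_U + 2 ^ θ * C_V + 2 ^ θ * C_U * C_V / log 2) * (1 + log z) * z ^ (-θ) *
        (1 + log z) ^ a := by gcongr
    _ = _ := by ring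

lemma TailUpperBound.mul_of_lt (hUC : TailUpperBound μ U θ a C_U)
    (hVC : TailUpperBound μ V θ' 0 C_V) (hind : IndepFun U V μ) (hV : ∀ᵐ ω ∂μ, 0 < V ω)
    (hθ : 0 ≤ θ) (hθθ' : θ < θ') :
    TailUpperBound μ (fun ω => U ω * V ω) θ a
      (C_U + 2 ^ θ * C_V + 2 ^ θ * C_U * C_V * (1 - 2 ^ (θ - θ'))⁻¹) := by
  intro z hz
  obtain ⟨K, hKz, hzK⟩ := exists_nat_pow_near hz one_lt_two
  have hprod : 0 ≤ 2 ^ θ * C_U * C_V := by have := hUC.nonneg; have := hVC.nonneg; positivity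
  have hr : (2 : ℝ) ^ (θ - θ') < 1 := rpow_lt_one_of_one_lt_of_neg one_lt_two (by linarith)
  have hgeom : ∑ k ∈ Finset.range K, ((2 : ℝ) ^ (θ - θ')) ^ k ≤ (1 - 2 ^ (θ - θ'))⁻¹ := by
    have := geom_sum_Ico_le_of_lt_one (m := 0) (n := K) (by positivity) hr
    rwa [← Finset.range_eq_Ico, pow_zero, one_div] at this
  refine (hUC.tailProb_mul_le hVC hind hV hθ hθθ'.le hKz hzK).trans ?_
  have hL : 0 ≤ (1 + log z) ^ a := pow_nonneg (by linarith [log_nonneg hz]) a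
  gcongr

lemma TailLowerBound.mul_of_pos {c ε : ℝ} (hUc : TailLowerBound μ U θ a c) (hind : IndepFun U V μ)
    (hc : 0 ≤ c) (hε : 0 < ε) :
    TailLowerBound μ (fun ω => U ω * V ω) θ a (c * ε ^ θ * tailProb μ V ε / 2 ^ a) := by
  filter_upwards [(tendsto_id.atTop_div_const hε).eventually hUc,
    tendsto_log_atTop.eventually_ge_atTop (2 * log ε), tendsto_log_atTop.eventually_ge_atTop 0,
    eventually_gt_atTop 0] with z hUz hlogε hlogz hz
  have hlog : (1 + log z) / 2 ≤ 1 + log (z / ε) := by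
    rw [log_div hz.ne' hε.ne']
    linarith
  calc c * ε ^ θ * tailProb μ V ε / 2 ^ a * z ^ (-θ) * (1 + log z) ^ a
      = c * (z / ε) ^ (-θ) * ((1 + log z) / 2) ^ a * tailProb μ V ε := by
        rw [div_rpow_neg hz.le hε, div_pow]
        ring
    _ ≤ c * (z / ε) ^ (-θ) * (1 + log (z / ε)) ^ a * tailProb μ V ε := by
        have := tailProb_nonneg (μ := μ) V ε
        gcongr
    _ ≤ tailProb μ U (z / ε) * tailProb μ V ε := by
        gcongr
        · exact tailProb_nonneg V ε
        · exact hUz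
    _ ≤ tailProb μ (fun ω => U ω * V ω) z := mul_tailProb_le_tailProb_mul hind hz.le hε

lemma TailLowerBound.mul_of_slab {c d R : ℝ} (hUc : TailLowerBound μ U θ a c) (hU : Measurable U)
    (hV : Measurable V) (hind : IndepFun U V μ) (hc : 0 ≤ c) (hd : 0 ≤ d) (hR : 1 < R)
    (hslab : ∀ k, 1 ≤ k → d * (R ^ k) ^ (-θ) ≤ tailProb μ V (R ^ k) - tailProb μ V (R ^ (k + 1))) :
    TailLowerBound μ (fun ω => U ω * V ω) θ (a + 1) (c * d / (2 ^ (a + 2) * log R)) := by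
  obtain ⟨z₀, hz₀⟩ := eventually_atTop.1 hUc
  have hL : 0 < log R := log_pos hR
  filter_upwards [tendsto_sqrt_atTop.eventually_ge_atTop (max z₀ 1),
    tendsto_log_atTop.eventually_ge_atTop (8 * log R + 1)] with z hsz hlogz
  have hs1 : 1 ≤ √z := (le_max_right _ _).trans hsz
  have hz : 0 < z := sqrt_pos.1 (zero_lt_one.trans_le hs1)
  have hlogs : log √z = log z / 2 := log_sqrt hz.le
  -- Only the shells `R^k ≤ V < R^{k+1}` with `1 ≤ k < K`, `R^K ≤ √z`, are used: for them
  -- `z / R^k ≥ √z`, so `log (z / R^k) ≥ log z / 2`, and there are `≍ log z` of them.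
  obtain ⟨K, hKs, hsK⟩ := exists_nat_pow_near hs1 hR
  set b := c * d / 2 ^ a * z ^ (-θ) * (1 + log z) ^ a
  have hb : 0 ≤ b := mul_nonneg (by positivity) (pow_nonneg (by linarith [log_nonneg hs1, hlogs]) a)
  have hterm : ∀ k ∈ Finset.Ico 1 K,
      b ≤ tailProb μ U (z / R ^ k) * (tailProb μ V (R ^ k) - tailProb μ V (R ^ (k + 1))) := by
    intro k hk
    obtain ⟨hk1, hkK⟩ := Finset.mem_Ico.1 hk
    have hRk : 0 < R ^ k := by positivity
    have hsk : √z ≤ z / R ^ k := by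
      rw [le_div_iff₀ hRk]
      calc √z * R ^ k ≤ √z * √z := by
            gcongr
            exact (pow_le_pow_right₀ hR.le hkK.le).trans hKs
        _ = z := mul_self_sqrt hz.le
    have hlog : (1 + log z) / 2 ≤ 1 + log (z / R ^ k) := by
      linarith [log_le_log (by positivity) hsk, log_nonneg hs1]
    have hprod : (z / R ^ k) ^ (-θ) * (R ^ k) ^ (-θ) = z ^ (-θ) := by
      rw [← mul_rpow (by positivity) hRk.le, div_mul_cancel₀ z hRk.ne']
    calc b = c * (z / R ^ k) ^ (-θ) * ((1 + log z) / 2) ^ a * (d * (R ^ k) ^ (-θ)) := by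
          simp only [b, div_pow]
          linear_combination (c * d * (1 + log z) ^ a / 2 ^ a) * hprod.symm
      _ ≤ c * (z / R ^ k) ^ (-θ) * (1 + log (z / R ^ k)) ^ a * (d * (R ^ k) ^ (-θ)) := by
          gcongr
          linarith [log_nonneg hs1, hlogs]
      _ ≤ _ := mul_le_mul (hz₀ _ ((le_max_left _ _).trans (hsz.trans hsk))) (hslab k hk1)
          (by positivity) (tailProb_nonneg _ _)
  have hK := div_le_natCast_pred_of_sqrt_lt_pow hR hz hlogz hsK
  calc c * d / (2 ^ (a + 2) * log R) * z ^ (-θ) * (1 + log z) ^ (a + 1)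
      = (1 + log z) / (4 * log R) * b := by
        simp only [b]
        field_simp
        ring
    _ ≤ ((K - 1 : ℕ) : ℝ) * b := by gcongr
    _ = ∑ k ∈ Finset.Ico 1 K, b := by rw [Finset.sum_const, Nat.card_Ico, nsmul_eq_mul]
    _ ≤ _ := (Finset.sum_le_sum hterm).trans
        (sum_tailProb_mul_sub_le_tailProb_mul hU hV hind hR hz.le _)

lemma HasTailOrder.mul_of_eq (hU : HasTailOrder μ U θ a) (hV : HasTailOrder μ V θ 0)
    (hUm : Measurable U) (hVm : Measurable V) (hind : IndepFun U V μ) (hVpos : ∀ᵐ ω ∂μ, 0 < V ω)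
    (hθ : 0 < θ) :
    HasTailOrder μ (fun ω => U ω * V ω) θ (a + 1) := by
  obtain ⟨⟨C_U, hCU⟩, c_U, hc_U, hlU⟩ := hU
  obtain ⟨⟨C_V, hCV⟩, c_V, hc_V, hlV⟩ := hV
  obtain ⟨R, hR, hslab⟩ := hCV.exists_slab_lowerBound hlV hc_V hθ
  have hL := log_pos hR
  exact ⟨⟨_, hCU.mul_of_eq hCV hind hVpos hθ.le⟩, _, by positivity,
    hlU.mul_of_slab hUm hVm hind hc_U.le (by positivity) hR hslab⟩

lemma HasTailOrder.mul_of_lt (hU : HasTailOrder μ U θ a) (hV : HasTailOrder μ V θ' 0)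
    (hind : IndepFun U V μ) (hVpos : ∀ᵐ ω ∂μ, 0 < V ω) (hθ : 0 ≤ θ) (hθθ' : θ < θ') :
    HasTailOrder μ (fun ω => U ω * V ω) θ a := by
  obtain ⟨⟨C_U, hCU⟩, c_U, hc_U, hlU⟩ := hU
  obtain ⟨⟨C_V, hCV⟩, c_V, hc_V, hlV⟩ := hV
  obtain ⟨ε, hVε, hε⟩ := (hlV.and (eventually_gt_atTop 0)).exists
  have hVε' : 0 < tailProb μ V ε :=
    lt_of_lt_of_le (by simp only [pow_zero, mul_one]; positivity) hVε
  exact ⟨⟨_, hCU.mul_of_lt hCV hind hVpos hθ hθθ'⟩, _, by positivity,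
    hlU.mul_of_pos hind hc_U.le hε⟩

end Tail

section Products

variable {Ω ι : Type*} [MeasurableSpace Ω] {μ : Measure Ω} {θ θ' : ℝ} {a : ℕ} {f : ι → Ω → ℝ}

lemma ProbabilityTheory.iIndepFun.indepFun_prod_apply_of_notMem (hind : iIndepFun f μ)
    (hf : ∀ i, Measurable (f i)) {s : Finset ι} {i : ι} (hi : i ∉ s) :
    IndepFun (fun ω => ∏ j ∈ s, f j ω) (f i) μ := by
  simpa only [Finset.prod_fn] using hind.indepFun_finsetProd_of_notMem hf hi

variable [IsFiniteMeasure μ]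

lemma hasTailOrder_prod_of_eq (hind : iIndepFun f μ) (hf : ∀ i, Measurable (f i))
    (hpos : ∀ i, ∀ᵐ ω ∂μ, 0 < f i ω) (hθ : 0 < θ) {s : Finset ι}
    (htail : ∀ i ∈ s, HasTailOrder μ (f i) θ 0) (hs : s.Nonempty) :
    HasTailOrder μ (fun ω => ∏ i ∈ s, f i ω) θ (s.card - 1) := by
  induction hs using Finset.Nonempty.cons_induction with
  | singleton i => simpa using htail i (Finset.mem_singleton_self i)
  | cons i s hi hs ih =>
    rw [Finset.card_cons, Nat.add_sub_cancel, ← Nat.sub_add_cancel hs.card_pos]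
    simp_rw [Finset.prod_cons, mul_comm (f i _)]
    exact (ih fun j hj => htail j (Finset.mem_cons_of_mem hj)).mul_of_eq
      (htail i (Finset.mem_cons_self i s)) (Finset.measurable_prod s fun j _ => hf j) (hf i)
      (hind.indepFun_prod_apply_of_notMem hf hi) (hpos i) hθ

lemma HasTailOrder.prod_union [DecidableEq ι] (hind : iIndepFun f μ) (hf : ∀ i, Measurable (f i))
    (hpos : ∀ i, ∀ᵐ ω ∂μ, 0 < f i ω) (hθ : 0 ≤ θ) (hθθ' : θ < θ') {s t : Finset ι}
    (hs : HasTailOrder μ (fun ω => ∏ i ∈ s, f i ω) θ a)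
    (htail : ∀ j ∈ t, HasTailOrder μ (f j) θ' 0) (hst : Disjoint s t) :
    HasTailOrder μ (fun ω => ∏ i ∈ s ∪ t, f i ω) θ a := by
  induction t using Finset.induction_on with
  | empty => simpa using hs
  | insert j t hj ih =>
    have hjst : j ∉ s ∪ t := by
      simp [hj, Finset.disjoint_right.1 hst (Finset.mem_insert_self j t)]
    rw [Finset.union_insert]
    simp_rw [Finset.prod_insert hjst, mul_comm (f j _)]
    exact (ih (fun k hk => htail k (Finset.mem_insert_of_mem hk))
      (hst.mono_right (Finset.subset_insert j t))).mul_of_lt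
      (htail j (Finset.mem_insert_self j t)) (hind.indepFun_prod_apply_of_notMem hf hjst)
      (hpos j) hθ hθθ'

end Products

theorem stmt_3 {Ω : Type*} [MeasureSpace Ω] [IsProbabilityMeasure (ℙ : Measure Ω)]
    (θ θbar : ℝ) (hθ : 0 < θ) (hθθ : θ < θbar) (p q : ℕ) (hp : 1 ≤ p)
    (X : Fin p → Ω → ℝ) (Y : Fin q → Ω → ℝ)
    (hXm : ∀ i, Measurable (X i)) (hYm : ∀ j, Measurable (Y j))
    (hXpos : ∀ i, ∀ᵐ ω ∂ℙ, 0 < X i ω) (hYpos : ∀ j, ∀ᵐ ω ∂ℙ, 0 < Y j ω)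
    (hindep : iIndepFun (Sum.elim X Y) ℙ)
    (htX : ∀ i, AsympAtTop (fun z => z ^ (-θ))
      (fun z => (ℙ {ω | z ≤ X i ω}).toReal))
    (htY : ∀ j, AsympAtTop (fun z => z ^ (-θbar))
      (fun z => (ℙ {ω | z ≤ Y j ω}).toReal)) :
    AsympAtTop (fun z => z ^ (-θ) * Real.log z ^ (p - 1))
      (fun z => (ℙ {ω | z ≤ (∏ i, X i ω) * ∏ j, Y j ω}).toReal) := by
  set f := Sum.elim X Y
  have hfm : ∀ i, Measurable (f i) := Sum.forall.2 ⟨hXm, hYm⟩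
  have hfpos : ∀ i, ∀ᵐ ω ∂ℙ, 0 < f i ω := Sum.forall.2 ⟨hXpos, hYpos⟩
  set s := Finset.univ.map (Function.Embedding.inl : Fin p ↪ Fin p ⊕ Fin q)
  set t := Finset.univ.map (Function.Embedding.inr : Fin q ↪ Fin p ⊕ Fin q)
  have hst : Disjoint s t := by simp [s, t, Finset.disjoint_left]
  have hs : HasTailOrder ℙ (fun ω => ∏ i ∈ s, f i ω) θ (p - 1) := by
    simpa [s] using hasTailOrder_prod_of_eq hindep hfm hfpos hθ (s := s)
      (by simpa [s, f] using fun i => hasTailOrder_of_asympAtTop hθ.le (htX i))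
      ⟨.inl ⟨0, hp⟩, by simp [s]⟩
  have hXY := hs.prod_union hindep hfm hfpos hθ.le hθθ
    (by simpa [t, f] using fun j => hasTailOrder_of_asympAtTop (hθ.trans hθθ).le (htY j)) hst
  have hprod : (fun ω => ∏ i ∈ s ∪ t, f i ω) = fun ω => (∏ i, X i ω) * ∏ j, Y j ω := by
    ext ω
    simp [Finset.prod_union hst, s, t, f]
  rw [hprod] at hXY
  exact hXY.asympAtTop
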